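/- arXiv:2010.03810 — 3 statements merged into one kernel-verified Lean document; each statement's English description precedes it below -/
import Mathlib

section
/- Let (a_1, …, a_r) be an r-tuple of nonnegative integers with a_1 + ⋯ + a_r = n. Suppose at least four of the a_k are odd. Then for every k with 1 ≤ k ≤ r, the multinomial coefficient C(n−2; a_1, …, a_k − 2, …, a_r) is even, and for all indices l < m, the multinomial coefficient C(n−2; a_1, …, a_l − 1, …, a_m − 1, …, a_r) is even. -/
lemma even_choose_of_even_odd {n k : ℕ} (hn : Even n) (hk : Odd k) : Even (n.choose k) := by
  obtain ⟨k, rfl⟩ := hk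
  cases n with
  | zero => simp [Nat.choose_eq_zero_of_lt]
  | succ n =>
    have h := Nat.add_one_mul_choose_eq n (2 * k)
    have h2 : Even ((n + 1).choose (2 * k + 1) * (2 * k + 1)) := by
      rw [← h]; exact hn.mul_right _
    rcases Nat.even_mul.mp h2 with h3 | h3
    · exact h3
    · exact absurd h3 (by simp [Nat.even_add_one, Nat.even_mul])

lemma even_multinomial {ι : Type*} [DecidableEq ι] (s : Finset ι) (f : ι → ℕ)
    {i j : ι} (hi : i ∈ s) (hj : j ∈ s) (hij : i ≠ j)
    (oi : Odd (f i)) (oj : Odd (f j)) : Even (Nat.multinomial s f) := by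
  set t := (s.erase i).erase j with ht
  have hjt : j ∉ t := Finset.notMem_erase _ _
  have hit : i ∉ insert j t := by
    simp [ht, hij, Finset.mem_erase, Ne.symm hij]
  have hs : s = insert i (insert j t) := by
    rw [ht, Finset.insert_erase (Finset.mem_erase.mpr ⟨Ne.symm hij, hj⟩),
      Finset.insert_erase hi]
  rw [hs, Nat.multinomial_insert hit, Nat.multinomial_insert hjt]
  rw [Finset.sum_insert hjt]
  rcases Nat.even_or_odd (∑ x ∈ t, f x) with hT | hT
  · have hE : Even (f i + (f j + ∑ x ∈ t, f x)) := by
      rcases oi with ⟨c, hc⟩; rcases oj with ⟨d, hd⟩; rcases hT with ⟨e, he⟩; exact ⟨c + d + 1 + e, by omega⟩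
    exact (even_choose_of_even_odd hE oi).mul_right _
  · have hE : Even (f j + ∑ x ∈ t, f x) := oj.add_odd hT
    exact ((even_choose_of_even_odd hE oj).mul_right _).mul_left _


/-- Multinomial coefficient of an integer tuple; by convention `0` if any entry is negative. -/
def multinomialZ {r : ℕ} (a : Fin r → ℤ) : ℕ :=
  if ∀ i, 0 ≤ a i then Nat.multinomial Finset.univ (fun i => (a i).toNat) else 0

/-- The multinomial coefficient in which entry `k` is decreased by 2. -/
def sub2 {r : ℕ} (a : Fin r → ℕ) (k : Fin r) : ℕ :=
  multinomialZ (fun i => (a i : ℤ) - if i = k then 2 else 0)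

/-- The multinomial coefficient in which entries `l` and `m` are each decreased by 1. -/
def sub11 {r : ℕ} (a : Fin r → ℕ) (l m : Fin r) : ℕ :=
  multinomialZ (fun i => (a i : ℤ) - (if i = l then 1 else 0) - (if i = m then 1 else 0))

/-- If at least four of the `a_k` are odd, then every
`C(n-2; a_1, …, a_k - 2, …, a_r)` is even, and every
`C(n-2; a_1, …, a_l - 1, …, a_m - 1, …, a_r)` with `l < m` is even. -/
theorem stmt6 {r n : ℕ} (a : Fin r → ℕ) (h : ∑ i, a i = n)
    (hyp : 4 ≤ (Finset.univ.filter (fun k : Fin r => Odd (a k))).card) :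
    (∀ k : Fin r, Even (sub2 a k)) ∧
      (∀ l m : Fin r, l < m → Even (sub11 a l m)) := by
  set S := Finset.univ.filter (fun k : Fin r => Odd (a k)) with hS
  constructor
  · intro k
    unfold sub2 multinomialZ
    split
    case isFalse => exact Even.zero
    case isTrue hpos =>
      obtain ⟨i, hi, j, hj, hij⟩ := Finset.one_lt_card.mp (by omega : 1 < S.card)
      have key : ∀ x ∈ S, Odd (((a x : ℤ) - if x = k then 2 else 0).toNat) := by
        intro x hx
        have hodd := (Finset.mem_filter.mp hx).2
        have h2 := hpos x
        simp only at h2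
        rw [Nat.odd_iff] at hodd ⊢
        by_cases hxk : x = k
        · rw [if_pos hxk] at h2 ⊢; omega
        · rw [if_neg hxk] at h2 ⊢; omega
      exact even_multinomial Finset.univ _ (Finset.mem_univ i) (Finset.mem_univ j) hij
        (key i hi) (key j hj)
  · intro l m hlm
    unfold sub11 multinomialZ
    split
    case isFalse => exact Even.zero
    case isTrue hpos =>
      have hcard : 1 < (S \ {l, m}).card := by
        have h1 := Finset.card_le_card_sdiff_add_card (s := S) (t := {l, m})
        have h2 : ({l, m} : Finset (Fin r)).card ≤ 2 :=
          (Finset.card_insert_le _ _).trans (by simp)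
        omega
      obtain ⟨i, hi, j, hj, hij⟩ := Finset.one_lt_card.mp hcard
      have key : ∀ x ∈ S \ ({l, m} : Finset (Fin r)),
          Odd (((a x : ℤ) - (if x = l then 1 else 0) - (if x = m then 1 else 0)).toNat) := by
        intro x hx
        obtain ⟨hx1, hx2⟩ := Finset.mem_sdiff.mp hx
        have hodd := (Finset.mem_filter.mp hx1).2
        simp only [Finset.mem_insert, Finset.mem_singleton, not_or] at hx2
        rw [Nat.odd_iff] at hodd ⊢
        rw [if_neg hx2.1, if_neg hx2.2]
        omega
      exact even_multinomial Finset.univ _ (Finset.mem_univ i) (Finset.mem_univ j) hij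
        (key i hi) (key j hj)
end

section
/- Let (a_1, …, a_r) be an r-tuple of nonnegative integers with a_1 + ⋯ + a_r = n, and let σ(a) = (a_2, a_3, …, a_r, a_1) be its cyclic shift. Then, as an identity of integers, n·S(σ(a)) = n·S(a) + (r·a_1 − n)·C(n; a_1, …, a_r). -/
/-- The multinomial coefficient in which entry `k` is decreased by 1. -/
def sub1 {r : ℕ} (a : Fin r → ℕ) (k : Fin r) : ℕ :=
  multinomialZ (fun i => (a i : ℤ) - if i = k then 1 else 0)

/-- `S(a) = ∑_{k=1}^{r-1} k ⬝ C(n-1; a_1, …, a_{k+1} - 1, …, a_r)`; here indices are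
`0`-based so the `(k+1)`-st part is the entry at index `k`, and the `k = 0` term vanishes. -/
def S {r : ℕ} (a : Fin r → ℕ) : ℕ :=
  ∑ k : Fin r, (k : ℕ) * sub1 a k

lemma key {r : ℕ} (a : Fin r → ℕ) (k : Fin r) :
    (∑ i, a i) * sub1 a k = a k * Nat.multinomial Finset.univ a := by
  rcases Nat.eq_zero_or_pos (a k) with h0 | hpos
  · have : sub1 a k = 0 := by
      unfold sub1 multinomialZ
      rw [if_neg]
      push_neg
      exact ⟨k, by simp [h0]⟩
    rw [this, h0]; simp
  · set b : Fin r → ℕ := fun i => a i - (if i = k then 1 else 0) with hbdef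
    have hb : sub1 a k = Nat.multinomial Finset.univ b := by
      unfold sub1 multinomialZ
      rw [if_pos]
      · congr 1
        funext i
        by_cases hik : i = k <;> simp [hik, hbdef] <;> omega
      · intro i
        by_cases hik : i = k <;> simp [hik] <;> omega
    have hab : ∀ i, a i = b i + (if i = k then 1 else 0) := by
      intro i; by_cases hik : i = k <;> simp [hik, hbdef] <;> omega
    have hsum : ∑ i, a i = (∑ i, b i) + 1 := by
      calc ∑ i, a i = ∑ i, (b i + if i = k then 1 else 0) :=
            Finset.sum_congr rfl (fun i _ => hab i)
        _ = (∑ i, b i) + 1 := by rw [Finset.sum_add_distrib]; simp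
    have hP : ∏ i, Nat.factorial (a i) = a k * ∏ i, Nat.factorial (b i) := by
      rw [← Finset.mul_prod_erase Finset.univ _ (Finset.mem_univ k),
          ← Finset.mul_prod_erase Finset.univ _ (Finset.mem_univ k)]
      have hbk : (b k) = a k - 1 := by simp [hbdef]
      have h1 : Nat.factorial (a k) = a k * Nat.factorial (b k) := by
        rw [hbk, Nat.mul_factorial_pred hpos.ne']
      rw [h1]
      have h2 : ∀ i ∈ Finset.univ.erase k, Nat.factorial (a i) = Nat.factorial (b i) := by
        intro i hi
        rw [hbdef]; simp [Finset.mem_erase.mp hi |>.1]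
      rw [Finset.prod_congr rfl h2]
      ring
    have hPpos : 0 < ∏ i, Nat.factorial (b i) := Finset.prod_pos (fun i _ => Nat.factorial_pos _)
    apply Nat.eq_of_mul_eq_mul_right hPpos
    have spec_b := Nat.multinomial_spec Finset.univ b
    have spec_a := Nat.multinomial_spec Finset.univ a
    calc (∑ i, a i) * sub1 a k * ∏ i, Nat.factorial (b i)
        = (∑ i, a i) * ((∏ i, Nat.factorial (b i)) * Nat.multinomial Finset.univ b) := by
          rw [hb]; ring
      _ = (∑ i, a i) * Nat.factorial (∑ i, b i) := by rw [spec_b]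
      _ = ((∑ i, b i) + 1) * Nat.factorial (∑ i, b i) := by rw [hsum]
      _ = Nat.factorial (∑ i, a i) := by rw [← Nat.factorial_succ, ← hsum]
      _ = a k * Nat.multinomial Finset.univ a * ∏ i, Nat.factorial (b i) := by
          rw [← spec_a, hP]; ring

lemma nS {r n : ℕ} (a : Fin r → ℕ) (h : ∑ i, a i = n) :
    (n : ℤ) * S a = ∑ k : Fin r, (k : ℤ) * (a k : ℤ) * (Nat.multinomial Finset.univ a : ℤ) := by
  have : n * S a = ∑ k : Fin r, (k : ℕ) * (a k * Nat.multinomial Finset.univ a) := by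
    rw [S, Finset.mul_sum]
    refine Finset.sum_congr rfl (fun k _ => ?_)
    rw [← Nat.mul_left_comm, ← h, key]
  have := congrArg (Nat.cast (R := ℤ)) this
  push_cast at this
  rw [this]
  refine Finset.sum_congr rfl (fun k _ => ?_)
  ring

/-- If `σ(a) = (a_2, …, a_r, a_1)` is the cyclic shift of `a` (realized by
precomposing with `finRotate r`, which sends `k ↦ k + 1`), then
`n ⬝ S(σ(a)) = n ⬝ S(a) + (r ⬝ a_1 - n) ⬝ C(n; a_1, …, a_r)` in `ℤ`. -/
theorem stmt9 {r n : ℕ} (hr : 0 < r) (a : Fin r → ℕ) (h : ∑ k, a k = n) :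
    (n : ℤ) * S (a ∘ finRotate r)
      = (n : ℤ) * S a +
        ((r : ℤ) * (a ⟨0, hr⟩ : ℤ) - (n : ℤ)) * Nat.multinomial Finset.univ a := by
  obtain ⟨m, rfl⟩ : ∃ m, r = m + 1 := ⟨r - 1, by omega⟩
  set σ := finRotate (m + 1)
  have hsum' : ∑ i, (a ∘ σ) i = n := by
    rw [← h]; exact Equiv.sum_comp σ a
  have hprod : ∏ i, Nat.factorial ((a ∘ σ) i) = ∏ i, Nat.factorial (a i) :=
    Equiv.prod_comp σ (fun i => Nat.factorial (a i))
  have hM : Nat.multinomial Finset.univ (a ∘ σ) = Nat.multinomial Finset.univ a := by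
    have s1 := Nat.multinomial_spec Finset.univ (a ∘ σ)
    have s2 := Nat.multinomial_spec Finset.univ a
    rw [hsum'] at s1; rw [h] at s2
    have hppos : 0 < ∏ i, Nat.factorial (a i) := Finset.prod_pos (fun i _ => Nat.factorial_pos _)
    apply Nat.eq_of_mul_eq_mul_left hppos
    rw [← hprod] at s2 ⊢
    rw [s1, s2]
  rw [nS (a ∘ σ) hsum', nS a h, hM]
  have h0 : (⟨0, hr⟩ : Fin (m+1)) = 0 := rfl
  rw [h0]
  set M : ℤ := (Nat.multinomial Finset.univ a : ℤ)
  -- reindex the shifted sum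
  have hre : ∑ k : Fin (m+1), (k : ℤ) * ((a ∘ σ) k : ℤ) * M
      = ∑ j : Fin (m+1), ((if (j : ℕ) = 0 then (m : ℤ) else (j : ℤ) - 1) * (a j : ℤ)) * M := by
    rw [← Equiv.sum_comp σ
      (fun j => ((if (j : ℕ) = 0 then (m : ℤ) else (j : ℤ) - 1) * (a j : ℤ)) * M)]
    refine Finset.sum_congr rfl (fun k _ => ?_)
    have hσ : (σ k : ℕ) = (k + 1 : ℕ) % (m + 1) := by
      simp [σ, finRotate_succ_apply, Fin.add_def]
    by_cases hk : (k : ℕ) = m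
    · have : (σ k : ℕ) = 0 := by rw [hσ, hk]; simp
      rw [this]; simp [hk]
    · have hlt : (k : ℕ) + 1 < m + 1 := by have := k.isLt; omega
      have : (σ k : ℕ) = (k : ℕ) + 1 := by rw [hσ, Nat.mod_eq_of_lt hlt]
      rw [this]
      have : ((k : ℕ) + 1) ≠ 0 := by omega
      simp only [this, if_false, Function.comp_apply]
      push_cast
      ring
  rw [hre]
  -- now expand
  have expand : ∀ j : Fin (m+1),
      ((if (j : ℕ) = 0 then (m : ℤ) else (j : ℤ) - 1) * (a j : ℤ)) * M
      = (j : ℤ) * (a j : ℤ) * M - (a j : ℤ) * M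
        + (if j = 0 then ((m : ℤ) + 1) * (a j : ℤ) * M else 0) := by
    intro j
    by_cases hj : j = 0
    · subst hj; simp; ring
    · have : (j : ℕ) ≠ 0 := fun hc => hj (Fin.ext hc)
      simp only [this, if_false, hj]
      ring
  rw [Finset.sum_congr rfl (fun j _ => expand j), Finset.sum_add_distrib,
    Finset.sum_sub_distrib, Finset.sum_ite_eq' Finset.univ (0 : Fin (m+1))]
  have hsa : ∑ j : Fin (m+1), (a j : ℤ) * M = (n : ℤ) * M := by
    rw [← Finset.sum_mul]; congr 1; push_cast [← h]; rfl
  rw [hsa]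
  simp only [Finset.mem_univ, if_true]
  push_cast
  ring
end

section
/- Let r be an odd prime, let n be a positive integer with n < r, and let (a_1, …, a_r) be an r-tuple of nonnegative integers with a_1 + ⋯ + a_r = n. Suppose the r multinomial coefficients C(n−1; a_1, …, a_k − 1, …, a_r), for 1 ≤ k ≤ r, do not all lie in a single residue class modulo r. Then for every s with 0 ≤ s ≤ r−1 there exists a permutation π of {1, …, r} such that S(a_{π(1)}, …, a_{π(r)}) ≡ s (mod r). -/
lemma multinomialZ_comp {r : ℕ} (b : Fin r → ℤ) (π : Equiv.Perm (Fin r)) :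
    multinomialZ (b ∘ π) = multinomialZ b := by
  unfold multinomialZ
  simp only [Function.comp_apply]
  by_cases hb : ∀ i, 0 ≤ b i
  · rw [if_pos (fun i => hb (π i)), if_pos hb]
    simp only [Nat.multinomial]
    rw [Equiv.sum_comp π (fun i => (b i).toNat),
      Equiv.prod_comp π (fun i => (b i).toNat.factorial)]
  · rw [if_neg, if_neg hb]
    intro hc
    exact hb fun i => by simpa using hc (π.symm i)

lemma sub1_comp {r : ℕ} (a : Fin r → ℕ) (π : Equiv.Perm (Fin r)) (k : Fin r) :
    sub1 (a ∘ π) k = sub1 a (π k) := by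
  unfold sub1
  have : (fun i => ((a ∘ π) i : ℤ) - if i = k then 1 else 0)
      = (fun i => (a i : ℤ) - if i = π k then 1 else 0) ∘ π := by
    funext i
    simp only [Function.comp_apply]
    congr 1
    simp [EmbeddingLike.apply_eq_iff_eq]
  rw [this, multinomialZ_comp]

lemma key_identity {r n : ℕ} (a : Fin r → ℕ) (h : ∑ i, a i = n) (k : Fin r) :
    n * sub1 a k = a k * Nat.multinomial Finset.univ a := by
  rcases Nat.eq_zero_or_pos (a k) with h0 | hpos
  · have : sub1 a k = 0 := by
      unfold sub1 multinomialZ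
      rw [if_neg]
      push_neg
      exact ⟨k, by simp [h0]⟩
    simp [this, h0]
  · set a' : Fin r → ℕ := Function.update a k (a k - 1) with ha'
    have hn1 : 1 ≤ n := by
      have : a k ≤ ∑ i, a i := Finset.single_le_sum (fun i _ => Nat.zero_le _) (Finset.mem_univ k)
      omega
    have hsub : sub1 a k = Nat.multinomial Finset.univ a' := by
      unfold sub1 multinomialZ
      rw [if_pos]
      · congr 1
        funext i
        by_cases hik : i = k
        · subst hik
          simp [ha', Function.update_apply]
          try omega
        · simp [hik, ha', Function.update_apply]
      · intro i
        by_cases hik : i = k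
        · subst hik; simp; omega
        · simp [hik]
    have heq : ∑ i ∈ Finset.univ.erase k, a' i = ∑ i ∈ Finset.univ.erase k, a i :=
      Finset.sum_congr rfl
        (fun i hi => by simp [ha', Function.update_apply, (Finset.mem_erase.mp hi).1])
    have e1 := Finset.add_sum_erase Finset.univ a (Finset.mem_univ k)
    have e2 := Finset.add_sum_erase Finset.univ a' (Finset.mem_univ k)
    have hk' : a' k = a k - 1 := by simp [ha']
    have hsum' : ∑ i, a' i = n - 1 := by omega
    have h2 : ∏ i, (a' i).factorial
        = (a k - 1).factorial * ∏ i ∈ Finset.univ.erase k, (a i).factorial := by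
      rw [← Finset.mul_prod_erase Finset.univ (fun i => (a' i).factorial) (Finset.mem_univ k)]
      congr 1
      · simp [ha']
      · exact Finset.prod_congr rfl
          (fun i hi => by simp [ha', Function.update_apply, (Finset.mem_erase.mp hi).1])
    have hprod : ∏ i, (a i).factorial = a k * ∏ i, (a' i).factorial := by
      rw [h2, ← Finset.mul_prod_erase Finset.univ (fun i => (a i).factorial) (Finset.mem_univ k),
        ← mul_assoc, Nat.mul_factorial_pred hpos.ne']
    have hP' : 0 < ∏ i, (a' i).factorial :=
      Finset.prod_pos (fun i _ => Nat.factorial_pos _)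
    apply Nat.eq_of_mul_eq_mul_left hP'
    rw [hsub]
    have spec' := Nat.multinomial_spec Finset.univ a'
    have spec := Nat.multinomial_spec Finset.univ a
    rw [hsum'] at spec'
    rw [h] at spec
    calc (∏ i, (a' i).factorial) * (n * Nat.multinomial Finset.univ a')
        = n * ((∏ i, (a' i).factorial) * Nat.multinomial Finset.univ a') := by ring
      _ = n * (n - 1).factorial := by rw [spec']
      _ = n.factorial := Nat.mul_factorial_pred (by omega)
      _ = (∏ i, (a i).factorial) * Nat.multinomial Finset.univ a := spec.symm
      _ = (∏ i, (a' i).factorial) * (a k * Nat.multinomial Finset.univ a) := by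
          rw [hprod]; ring

lemma sum_sub1 {r n : ℕ} (hn : 0 < n) (a : Fin r → ℕ) (h : ∑ i, a i = n) :
    ∑ k, sub1 a k = Nat.multinomial Finset.univ a := by
  apply Nat.eq_of_mul_eq_mul_left hn
  rw [Finset.mul_sum]
  calc ∑ k, n * sub1 a k = ∑ k, a k * Nat.multinomial Finset.univ a := by
        exact Finset.sum_congr rfl (fun k _ => key_identity a h k)
    _ = n * Nat.multinomial Finset.univ a := by rw [← Finset.sum_mul, h]

/-- Let `r` be an odd prime and `n` a positive integer with `n < r`.
If the multinomial coefficients `C(n-1; a_1, …, a_k - 1, …, a_r)`, `1 ≤ k ≤ r`, do not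
all lie in a single residue class modulo `r`, then for every `s` with `0 ≤ s ≤ r - 1`
some permutation `π` of the entries satisfies `S(a ∘ π) ≡ s (mod r)`. -/
theorem stmt12 {r n : ℕ} (hr : Nat.Prime r) (hodd : Odd r)
    (hn : 0 < n) (hnr : n < r)
    (a : Fin r → ℕ) (h : ∑ i, a i = n)
    (hres : ¬ ∀ k l : Fin r, sub1 a k ≡ sub1 a l [MOD r]) :
    ∀ s : ℕ, s ≤ r - 1 →
      ∃ π : Equiv.Perm (Fin r), S (a ∘ π) ≡ s [MOD r] := by
  intro s hs
  haveI : NeZero r := ⟨hr.ne_zero⟩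
  haveI : Fact (Nat.Prime r) := ⟨hr⟩
  have hMsum : ∑ k, sub1 a k = Nat.multinomial Finset.univ a := sum_sub1 hn a h
  set M : ℕ := Nat.multinomial Finset.univ a with hMdef
  have hMne : ((M : ℕ) : ZMod r) ≠ 0 := by
    rw [Ne, ZMod.natCast_eq_zero_iff]
    intro hdvd
    have hspec := Nat.multinomial_spec Finset.univ a
    rw [h] at hspec
    have hdf : r ∣ n.factorial := hdvd.trans (Dvd.intro_left _ hspec)
    have := (Nat.Prime.dvd_factorial hr).mp hdf
    omega
  set t : ℕ := (((s : ZMod r) - ((S a : ℕ) : ZMod r)) * ((M : ZMod r))⁻¹).val with ht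
  open Fin.NatCast in set π : Equiv.Perm (Fin r) := Equiv.subRight ((t : Fin r)) with hπ
  refine ⟨π, ?_⟩
  rw [← ZMod.natCast_eq_natCast_iff]
  have hS : S (a ∘ π) = ∑ j : Fin r, ((π.symm j : Fin r) : ℕ) * sub1 a j := by
    unfold S
    have h1 : ∀ k ∈ Finset.univ, ((k : Fin r) : ℕ) * sub1 (a ∘ π) k
        = ((k : Fin r) : ℕ) * sub1 a (π k) := fun k _ => by rw [sub1_comp]
    rw [Finset.sum_congr rfl h1]
    exact Fintype.sum_equiv π _ _ (fun k => by rw [Equiv.symm_apply_apply])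
  have hcast : ∀ j : Fin r, (((π.symm j : Fin r) : ℕ) : ZMod r)
      = ((j : ℕ) : ZMod r) + (t : ZMod r) := by
    intro j
    open Fin.NatCast in have hsymm : π.symm j = j + (t : Fin r) := by simp [hπ]
    open Fin.NatCast in rw [hsymm, Fin.val_add, ZMod.natCast_mod, Nat.cast_add, Fin.val_natCast, ZMod.natCast_mod]
  rw [hS]
  push_cast
  have h3 : ((S a : ℕ) : ZMod r) = ∑ j : Fin r, ((j : ℕ) : ZMod r) * (sub1 a j : ZMod r) := by
    unfold S; push_cast; rfl
  have h4 : ((M : ℕ) : ZMod r) = ∑ j : Fin r, (sub1 a j : ZMod r) := by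
    rw [← hMsum]; push_cast; rfl
  have h5 : (t : ZMod r) = ((s : ZMod r) - ((S a : ℕ) : ZMod r)) * ((M : ZMod r))⁻¹ :=
    ZMod.natCast_rightInverse _
  calc ∑ j : Fin r, (((π.symm j : Fin r) : ℕ) : ZMod r) * (sub1 a j : ZMod r)
      = ∑ j : Fin r, (((j : ℕ) : ZMod r) + (t : ZMod r)) * (sub1 a j : ZMod r) :=
        Finset.sum_congr rfl fun j _ => by rw [hcast]
    _ = (∑ j : Fin r, ((j : ℕ) : ZMod r) * (sub1 a j : ZMod r))
        + (t : ZMod r) * ∑ j : Fin r, (sub1 a j : ZMod r) := by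
        rw [Finset.mul_sum, ← Finset.sum_add_distrib]
        exact Finset.sum_congr rfl fun j _ => by ring
    _ = ((S a : ℕ) : ZMod r) + (t : ZMod r) * ((M : ℕ) : ZMod r) := by rw [h3, h4]
    _ = (s : ZMod r) := by
        rw [h5, mul_assoc, inv_mul_cancel₀ hMne, mul_one]
        ring
end
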